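/- arXiv:1208.1074 — 4 statements merged into one kernel-verified Lean document; each statement's English description precedes it below -/
import Mathlib

section
/- Let C : [0,δ] → (0,∞) be smooth and define f(r) = A·exp(−∫₀ʳ 2sC(s)/(1 + C(s)s²) ds) for a constant A > 0. Then f satisfies the differential equation C(r)(r²f'(r) + 2rf(r)) = −f'(r) for all r ∈ [0,δ]; consequently the Reeb vector field of f·(dz + r²dθ) on the solid torus is parallel to ∂_z + C(r)∂_θ, i.e., its first return map to a meridian disk is rotation by angle C(r) on the circle of radius r. -/
/- If f(r) = A·exp(−∫₀ʳ 2sC(s)/(1+C(s)s²) ds) with A > 0 and C smooth positive,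
   then C(r)(r²f' + 2rf) = −f' on [0,δ]; consequently the Reeb vector field
   R = (1/(2rf))·((r²f'+2rf)∂_z − f'∂_θ) of f·(dz + r²dθ) is parallel to
   ∂_z + C(r)∂_θ, i.e. (Rθ, Rz) = λ·(C(r), 1) for some λ > 0. -/
theorem stmt1 (δ A : ℝ) (hδ : 0 < δ) (hA : 0 < A)
    (C : ℝ → ℝ) (hC : ContDiff ℝ (⊤ : ℕ∞) C) (hCpos : ∀ r, 0 < C r)
    (f : ℝ → ℝ)
    (hf : ∀ r : ℝ, f r = A * Real.exp (-∫ s in (0:ℝ)..r, 2 * s * C s / (1 + C s * s ^ 2))) :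
    ∀ r ∈ Set.Icc (0:ℝ) δ,
      C r * (r ^ 2 * deriv f r + 2 * r * f r) = -(deriv f r) ∧
      (0 < r → ∃ lam : ℝ, 0 < lam ∧
        -(deriv f r) / (2 * r * f r) = lam * C r ∧
        (r ^ 2 * deriv f r + 2 * r * f r) / (2 * r * f r) = lam * 1) := by
  -- the integrand
  set g : ℝ → ℝ := fun s => 2 * s * C s / (1 + C s * s ^ 2) with hg_def
  have hden : ∀ s : ℝ, 0 < 1 + C s * s ^ 2 := fun s => by
    have := (hCpos s).le
    positivity
  have hCc : Continuous C := hC.continuous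
  have hgcont : Continuous g := by
    apply Continuous.div
    · exact (continuous_const.mul continuous_id).mul hCc
    · exact continuous_const.add (hCc.mul (by fun_prop))
    · exact fun s => (hden s).ne'
  -- derivative of f
  have hderiv : ∀ r : ℝ, HasDerivAt f (-(f r * g r)) r := by
    intro r
    have hI : HasDerivAt (fun u => ∫ s in (0:ℝ)..u, g s) (g r) r :=
      (hgcont.integral_hasStrictDerivAt 0 r).hasDerivAt
    have h1 : HasDerivAt (fun u => A * Real.exp (-∫ s in (0:ℝ)..u, g s))
        (A * (Real.exp (-∫ s in (0:ℝ)..r, g s) * (-(g r)))) r := by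
      exact (hI.neg.exp).const_mul A
    have h2 : HasDerivAt f (A * (Real.exp (-∫ s in (0:ℝ)..r, g s) * (-(g r)))) r := by
      refine h1.congr_of_eventuallyEq ?_
      filter_upwards with u using (hf u)
    convert h2 using 1
    rw [hf r]; ring
  intro r _
  have hfr : 0 < f r := by rw [hf r]; positivity
  have hD : deriv f r = -(f r * g r) := (hderiv r).deriv
  have hgr : g r = 2 * r * C r / (1 + C r * r ^ 2) := rfl
  have hd1 : (1 + C r * r ^ 2) ≠ 0 := (hden r).ne'
  have hCr := hCpos r
  have hkey : C r * (r ^ 2 * deriv f r + 2 * r * f r) = -(deriv f r) := by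
    rw [hD, hgr]
    field_simp
    ring
  refine ⟨hkey, fun hr => ?_⟩
  refine ⟨1 / (1 + C r * r ^ 2), by positivity, ?_, ?_⟩
  · rw [hD, hgr, div_eq_iff (by positivity : (2 * r * f r) ≠ 0)]
    field_simp
  · rw [hD, hgr, div_eq_iff (by positivity : (2 * r * f r) ≠ 0)]
    field_simp
    ring
end

section
/- Let Σ₁ = ℂP¹ − ([a₁,a₂] ∪ ⋯ ∪ [a_{2p−1}, a_{2p}]) with 0 < a₁ < ⋯ < a_{2p} real, with compactification Σ̄₁ adding p boundary circles ∂₁Σ̄₁, …, ∂_pΣ̄₁, and let Σ̄₂ be the closed unit disk. Let f : Σ̄₁ → Σ̄₂ be a holomorphic q-fold branched cover with q ≥ p such that f(∂_iΣ̄₁) = ∂Σ̄₂ for all i, f⁻¹(0) = {∞}, and f(0) ∈ ℝ^{≤0} ∩ Σ̄₂. Then f commutes with the anti-holomorphic involutions induced by complex conjugation: f ∘ ι₁ = ι₂ ∘ f; in particular f maps the fixed locus of conjugation on Σ̄₁ into ℝ ∩ Σ̄₂, and f maps the asymptotic marker at ∞ pointing in the negative real direction to the tangent half-line at 0 in the negative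 real direction. -/
/-!
The reflection `g z = conj (f (conj z))` is holomorphic and zero-free on `Sᶜ` because the slits
are real, so `Q = f / g` is holomorphic there. Its modulus `‖f z‖ / ‖f (conj z)‖` tends to `1` at
the slits (conjugation fixes them) and at `∞` (where `f` has a zero of finite order, and
`‖z‖ = ‖conj z‖`). The maximum principle gives `‖Q‖ ≤ 1`, and `Q x₀ = 1` at a real point with
`f x₀` real, so `Q ≡ 1` on the connected set `Sᶜ`. On `(-∞, 0]` the function `f` is then real and
zero-free, so it keeps the sign of `f 0`.
-/

open Complex Filter Topology Bornology
open scoped ComplexConjugate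

theorem Complex.norm_le_of_forall_frontier_eventually_norm_lt
    {E F : Type*} [NormedAddCommGroup E] [NormedSpace ℂ E] [Nontrivial E] [NormedAddCommGroup F]
    [NormedSpace ℂ F] {h : E → F} {U : Set E} {C : ℝ} (hU : IsOpen U)
    (hd : DifferentiableOn ℂ h U)
    (hfr : ∀ z ∈ frontier U, ∀ c > C, ∀ᶠ w in 𝓝[U] z, ‖h w‖ < c)
    (hcob : ∀ c > C, ∀ᶠ w in cobounded E, w ∈ U → ‖h w‖ < c) {z : E} (hz : z ∈ U) :
    ‖h z‖ ≤ C := by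
  -- Bounded maximum modulus on the superlevel set `W`, whose closure cannot reach `frontier U`.
  refine le_of_forall_gt_imp_ge_of_dense fun c hc => ?_
  set W := {w ∈ U | c < ‖h w‖}
  by_cases hzW : z ∈ W
  swap
  · exact not_lt.1 fun hlt => hzW ⟨hz, hlt⟩
  have hWopen : IsOpen W := hd.continuousOn.norm.isOpen_inter_preimage hU isOpen_Ioi
  have hWbdd : IsBounded W :=
    isBounded_def.2 <| (hcob c hc).mono fun w hw hwW => hwW.2.not_gt (hw hwW.1)
  have hclW : closure W ⊆ {w ∈ U | c ≤ ‖h w‖} := by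
    intro w hw
    have hlarge : ∀ᶠ v in 𝓝[W] w, c < ‖h v‖ := eventually_mem_nhdsWithin.mono fun v hv => hv.2
    have hne : (𝓝[W] w).NeBot := mem_closure_iff_nhdsWithin_neBot.1 hw
    have hwU : w ∈ U := by
      by_contra hwU
      have hfrw : w ∈ frontier U :=
        ⟨closure_mono (Set.sep_subset _ _) hw, by rwa [hU.interior_eq]⟩
      obtain ⟨v, hv₁, hv₂⟩ :=
        (((hfr w hfrw c hc).filter_mono (nhdsWithin_mono w (Set.sep_subset _ _))).and hlarge).exists
      exact lt_asymm hv₁ hv₂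
    have hcont : ContinuousAt (‖h ·‖) w := (hd.continuousOn.continuousAt (hU.mem_nhds hwU)).norm
    exact ⟨hwU, ge_of_tendsto (hcont.tendsto.mono_left nhdsWithin_le_nhds)
      (hlarge.mono fun v => le_of_lt)⟩
  refine norm_le_of_forall_mem_frontier_norm_le hWbdd
    ⟨hd.mono (Set.sep_subset _ _), hd.continuousOn.mono fun w hw => (hclW hw).1⟩
    (fun w hw => ?_) (subset_closure hzW)
  have hwW : w ∉ W := by rw [hWopen.frontier_eq] at hw; exact hw.2
  exact not_lt.1 fun hlt => hwW ⟨(hclW (frontier_subset_closure hw)).1, hlt⟩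

theorem AnalyticAt.tendsto_norm_div_norm_comp_conj {F : ℂ → ℂ} (hF : AnalyticAt ℂ F 0)
    (hF0 : ¬∀ᶠ w in 𝓝 0, F w = 0) :
    Tendsto (fun w => ‖F w‖ / ‖F (conj w)‖) (𝓝[≠] 0) (𝓝 1) := by
  obtain ⟨n, u, hu, hu0, hFu⟩ := hF.exists_eventuallyEq_pow_smul_nonzero_iff.2 hF0
  have hconj : Tendsto conj (𝓝 (0 : ℂ)) (𝓝 0) := by
    simpa using continuous_conj.tendsto (0 : ℂ)
  have hlim : Tendsto (fun w => ‖u w‖ / ‖u (conj w)‖) (𝓝 0) (𝓝 1) := by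
    have hu0' : ‖u 0‖ ≠ 0 := norm_ne_zero_iff.2 hu0
    simpa [Pi.div_def, div_self hu0'] using
      hu.continuousAt.norm.tendsto.div ((hu.continuousAt.tendsto.comp hconj).norm) hu0'
  refine (hlim.mono_left nhdsWithin_le_nhds).congr' ?_
  filter_upwards [nhdsWithin_le_nhds hFu, nhdsWithin_le_nhds (hconj.eventually hFu),
    self_mem_nhdsWithin] with w h₁ h₂ hw
  have hw' : ‖w‖ ^ n ≠ 0 := pow_ne_zero _ (norm_ne_zero_iff.2 hw)
  simp only [h₁, h₂, sub_zero, smul_eq_mul, norm_mul, norm_pow, RCLike.norm_conj]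
  rw [mul_div_mul_left _ _ hw']

theorem analyticAt_update_comp_inv_zero {E : Type*} [NormedAddCommGroup E] [NormedSpace ℂ E]
    [CompleteSpace E] {f : ℂ → E} {a : E}
    (hd : ∀ᶠ z in cobounded ℂ, DifferentiableAt ℂ f z) (hf : Tendsto f (cobounded ℂ) (𝓝 a)) :
    AnalyticAt ℂ (Function.update (fun w => f w⁻¹) 0 a) 0 := by
  refine Complex.analyticAt_of_differentiable_on_punctured_nhds_of_continuousAt ?_
    (continuousAt_update_same.2 (hf.comp tendsto_inv₀_nhdsNE_zero))
  filter_upwards [tendsto_inv₀_nhdsNE_zero.eventually hd, self_mem_nhdsWithin] with w hw hw0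
  have hupd : Function.update (fun w => f w⁻¹) 0 a =ᶠ[𝓝 w] fun v => f v⁻¹ :=
    eventually_of_mem (isOpen_ne.mem_nhds hw0) fun v hv => Function.update_of_ne hv _ _
  exact (hw.comp w (differentiableAt_inv hw0)).congr_of_eventuallyEq hupd

theorem tendsto_norm_div_norm_comp_conj_cobounded {f : ℂ → ℂ} {a : ℂ}
    (hd : ∀ᶠ z in cobounded ℂ, DifferentiableAt ℂ f z) (hf : Tendsto f (cobounded ℂ) (𝓝 a))
    (hnz : ∃ᶠ z in cobounded ℂ, f z ≠ 0) :
    Tendsto (fun z => ‖f z‖ / ‖f (conj z)‖) (cobounded ℂ) (𝓝 1) := by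
  set F := Function.update (fun w => f w⁻¹) 0 a
  have hFinv : ∀ w ≠ 0, F w = f w⁻¹ := fun w hw => Function.update_of_ne hw _ _
  have hF0 : ¬∀ᶠ w in 𝓝 0, F w = 0 := fun hzero => by
    obtain ⟨z, hfz, hFz, hz⟩ :=
      (hnz.and_eventually ((tendsto_inv₀_cobounded.eventually hzero).and
        (eventually_ne_cobounded 0))).exists
    rw [hFinv _ (inv_ne_zero hz), inv_inv] at hFz
    exact hfz hFz
  refine ((analyticAt_update_comp_inv_zero hd hf).tendsto_norm_div_norm_comp_conj hF0).comp
    tendsto_inv₀_cobounded' |>.congr' ?_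
  filter_upwards [eventually_ne_cobounded 0] with z hz
  have hz' : conj z ≠ 0 := by simpa using hz
  change ‖F z⁻¹‖ / ‖F (conj z⁻¹)‖ = _
  rw [map_inv₀, hFinv _ (inv_ne_zero hz), hFinv _ (inv_ne_zero hz'), inv_inv, inv_inv]

theorem Complex.apply_conj_eq_conj_apply_of_norm_tendsto_one {S : Set ℂ} (hSc : IsClosed S)
    (hSb : IsBounded S) (hSreal : ∀ z ∈ S, z.im = 0) (hconn : IsPreconnected Sᶜ)
    {f : ℂ → ℂ} {a : ℂ} (hhol : DifferentiableOn ℂ f Sᶜ)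
    (hbdry : ∀ z₀ ∈ S, Tendsto (fun z => ‖f z‖) (𝓝[Sᶜ] z₀) (𝓝 1))
    (hnz : ∀ z ∈ Sᶜ, f z ≠ 0) (hinf : Tendsto f (cobounded ℂ) (𝓝 a))
    {x₀ : ℝ} (hx₀ : (x₀ : ℂ) ∈ Sᶜ) (hfx₀ : (f x₀).im = 0) :
    ∀ z ∈ Sᶜ, f (conj z) = conj (f z) := by
  have hU : IsOpen Sᶜ := hSc.isOpen_compl
  have hconjU : ∀ z ∈ Sᶜ, conj z ∈ Sᶜ := fun z hz hzS => by
    have hz₀ : z.im = 0 := by simpa using hSreal _ hzS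
    rw [conj_eq_iff_im.2 hz₀] at hzS
    exact hz hzS
  set g : ℂ → ℂ := fun z => conj (f (conj z))
  have hg : DifferentiableOn ℂ g Sᶜ := fun z hz =>
    (differentiableAt_conj_conj_iff.2
      (hhol.differentiableAt (hU.mem_nhds (hconjU z hz)))).differentiableWithinAt
  have hgnz : ∀ z ∈ Sᶜ, g z ≠ 0 := fun z hz => by simpa [g] using hnz _ (hconjU z hz)
  set Q : ℂ → ℂ := fun z => f z / g z
  have hQ : DifferentiableOn ℂ Q Sᶜ := hhol.div hg hgnz
  have hnormQ : ∀ z, ‖Q z‖ = ‖f z‖ / ‖f (conj z)‖ := by simp [Q, g]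
  have hQx₀ : Q x₀ = 1 := by
    simp [Q, g, conj_eq_iff_im.2 hfx₀, div_self (hnz _ hx₀)]
  have hQle : ∀ z ∈ Sᶜ, ‖Q z‖ ≤ 1 := by
    refine fun z hz => norm_le_of_forall_frontier_eventually_norm_lt hU hQ ?_ ?_ hz
    · intro z₀ hz₀ c hc
      have hz₀S : z₀ ∈ S := hSc.frontier_subset (frontier_compl S ▸ hz₀)
      have hconjt : Tendsto conj (𝓝[Sᶜ] z₀) (𝓝[Sᶜ] z₀) := by
        have := continuous_conj.continuousWithinAt.tendsto_nhdsWithin hconjU (s := Sᶜ) (x := z₀)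
        rwa [conj_eq_iff_im.2 (hSreal z₀ hz₀S)] at this
      have hlim := (hbdry z₀ hz₀S).div ((hbdry z₀ hz₀S).comp hconjt) one_ne_zero
      rw [div_one] at hlim
      simpa only [hnormQ, Pi.div_apply, Function.comp_apply] using hlim.eventually (gt_mem_nhds hc)
    · intro c hc
      have hcob : Sᶜ ∈ cobounded ℂ := isBounded_def.1 hSb
      have hd : ∀ᶠ z in cobounded ℂ, DifferentiableAt ℂ f z :=
        eventually_of_mem hcob fun z hz => hhol.differentiableAt (hU.mem_nhds hz)
      have hlim := tendsto_norm_div_norm_comp_conj_cobounded hd hinf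
        (eventually_of_mem hcob hnz).frequently
      filter_upwards [hlim.eventually (gt_mem_nhds hc)] with z hz _
      rwa [hnormQ]
  have hmax : IsMaxOn (norm ∘ Q) Sᶜ x₀ := fun z hz => by simpa [hQx₀] using hQle z hz
  intro z hz
  have hQz := Complex.eqOn_of_isPreconnected_of_isMaxOn_norm hconn hU hQ hx₀ hmax (hconjU z hz)
  rw [hQx₀] at hQz
  simpa [Q, g] using (div_eq_one_iff_eq (hgnz _ (hconjU z hz))).1 hQz

theorem Complex.isPreconnected_compl_of_subset_Ioi {S : Set ℂ}
    (hS : ∀ z ∈ S, 0 < z.re ∧ z.im = 0) : IsPreconnected Sᶜ := by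
  have hD : IsPreconnected (-slitPlane) := by
    simpa using (starConvex_one_slitPlane.isPathConnected one_mem_slitPlane).isConnected
      |>.isPreconnected.image _ continuous_neg.continuousOn
  refine hD.subset_closure (fun z hz hzS => ?_) fun z _ => ?_
  · rw [Set.mem_neg, mem_slitPlane_iff] at hz
    have hzpos := hS z hzS
    rcases hz with h | h
    · simp only [neg_re, neg_pos] at h
      linarith [hzpos.1]
    · simp only [neg_im, ne_eq, neg_eq_zero] at h
      exact h hzpos.2
  · have hdense : closure (im ⁻¹' {0}ᶜ) = Set.univ := by
      rw [closure_preimage_im, closure_compl_singleton, Set.preimage_univ]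
    refine closure_mono (fun w hw => ?_) (hdense ▸ Set.mem_univ z)
    rw [Set.mem_neg, mem_slitPlane_iff]
    exact Or.inr (by simpa using hw)

theorem IsPreconnected.neg_of_ne_zero {α : Type*} [TopologicalSpace α] {s : Set α}
    {φ : α → ℝ} (hs : IsPreconnected s) (hφ : ContinuousOn φ s) (hne : ∀ x ∈ s, φ x ≠ 0)
    {x₀ : α} (hx₀ : x₀ ∈ s) (h₀ : φ x₀ ≤ 0) {x : α} (hx : x ∈ s) : φ x < 0 := by
  by_contra! h
  obtain ⟨y, hy, hy₀⟩ := hs.intermediate_value hx₀ hx hφ ⟨h₀, h⟩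
  exact hne y hy hy₀

theorem stmt10_general (p : ℕ)
    (a b : Fin p → ℝ)
    (hapos : ∀ i, 0 < a i)
    (S : Set ℂ)
    (hS : S = {z : ℂ | z.im = 0 ∧ ∃ i, z.re ∈ Set.Icc (a i) (b i)})
    (f : ℂ → ℂ)
    (hhol : DifferentiableOn ℂ f Sᶜ)
    (hbdry : ∀ z₀ ∈ S, Tendsto (fun z => ‖f z‖) (nhdsWithin z₀ Sᶜ) (nhds 1))
    (hnz : ∀ z ∈ Sᶜ, f z ≠ 0)
    (hinf : Tendsto f (cocompact ℂ) (nhds 0))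
    (hval : (f 0).im = 0 ∧ (f 0).re ≤ 0) :
    (∀ z ∈ Sᶜ, f ((starRingEnd ℂ) z) = (starRingEnd ℂ) (f z)) ∧
    (∀ x : ℝ, (x : ℂ) ∈ Sᶜ → (f x).im = 0) ∧
    (∀ x : ℝ, x ≤ 0 → (f x).im = 0 ∧ (f x).re < 0) := by
  have hSeq : S = ⋃ i, Set.Icc (a i) (b i) ×ℂ {0} := by
    ext z
    simp [hS, mem_reProdIm, and_comm]
  have hSpos : ∀ z ∈ S, 0 < z.re ∧ z.im = 0 := by
    simp only [hSeq, Set.mem_iUnion, mem_reProdIm, Set.mem_Icc, Set.mem_singleton_iff]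
    rintro z ⟨i, ⟨hai, -⟩, him⟩
    exact ⟨(hapos i).trans_le hai, him⟩
  have hleft : ∀ x : ℝ, x ≤ 0 → (x : ℂ) ∈ Sᶜ := fun x hx hxS =>
    lt_irrefl _ ((hSpos _ hxS).1.trans_le (by simpa using hx))
  have hconj := apply_conj_eq_conj_apply_of_norm_tendsto_one
    (hSeq ▸ isClosed_iUnion_of_finite fun i => isClosed_Icc.reProdIm isClosed_singleton)
    (hSeq ▸ isBounded_iUnion.2 fun i => (Metric.isBounded_Icc _ _).reProdIm isBounded_singleton)
    (fun z hz => (hSpos z hz).2) (isPreconnected_compl_of_subset_Ioi hSpos) hhol hbdry hnz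
    (Metric.cobounded_eq_cocompact (α := ℂ) ▸ hinf) (hleft 0 le_rfl) (by simpa using hval.1)
  have hreal : ∀ x : ℝ, (x : ℂ) ∈ Sᶜ → (f x).im = 0 := fun x hx =>
    conj_eq_iff_im.1 (by simpa using (hconj x hx).symm)
  have hcont : ContinuousOn (fun t : ℝ => (f t).re) (Set.Iic 0) :=
    continuous_re.comp_continuousOn <| hhol.continuousOn.comp continuous_ofReal.continuousOn hleft
  refine ⟨hconj, hreal, fun x hx => ⟨hreal x (hleft x hx), ?_⟩⟩
  exact isPreconnected_Iic.neg_of_ne_zero hcont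
    (fun t ht h0 => hnz _ (hleft t ht) (Complex.ext h0 (hreal t (hleft t ht))))
    (Set.mem_Iic.2 le_rfl) (by simpa using hval.2) hx

theorem stmt10 (p q : ℕ) (hp : 0 < p) (hq : p ≤ q)
    (a b : Fin p → ℝ)
    (hapos : ∀ i, 0 < a i) (hab : ∀ i, a i < b i)
    (horder : ∀ i j : Fin p, i < j → b i < a j)
    (S : Set ℂ)
    (hS : S = {z : ℂ | z.im = 0 ∧ ∃ i, z.re ∈ Set.Icc (a i) (b i)})
    (f : ℂ → ℂ)
    (hhol : DifferentiableOn ℂ f Sᶜ)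
    (hdisk : ∀ z ∈ Sᶜ, ‖f z‖ ≤ 1)
    (hbdry : ∀ z₀ ∈ S, Tendsto (fun z => ‖f z‖) (nhdsWithin z₀ Sᶜ) (nhds 1))
    (hnz : ∀ z ∈ Sᶜ, f z ≠ 0)
    (hinf : Tendsto f (cocompact ℂ) (nhds 0))
    (hcover : ∀ w : ℂ, ‖w‖ < 1 →
      (Sᶜ ∩ f ⁻¹' {w}).Finite ∧ (Sᶜ ∩ f ⁻¹' {w}).ncard ≤ q)
    (hval : (f 0).im = 0 ∧ (f 0).re ≤ 0) :
    (∀ z ∈ Sᶜ, f ((starRingEnd ℂ) z) = (starRingEnd ℂ) (f z)) ∧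
    (∀ x : ℝ, (x : ℂ) ∈ Sᶜ → (f x).im = 0) ∧
    (∀ x : ℝ, x ≤ 0 → (f x).im = 0 ∧ (f x).re < 0) :=
  stmt10_general p a b hapos S hS f hhol hbdry hnz hinf hval
end

section
/- Let Σ₁ = Σ₂ = ℂP¹, let 0 = a₁ < a₂ < ⋯ < a_p be nonnegative reals, and let f : ℂP¹ → ℂP¹ be a holomorphic q-fold branched cover with q ≥ p such that f⁻¹(∞) = {a₁, …, a_p}, f⁻¹(0) = {∞}, and f maps the tangent half-line at 0 in the negative real direction to the tangent half-line at ∞ corresponding to the negative real direction. Then f ∘ ι = ι ∘ f where ι is complex conjugation; in particular f maps ℝP¹ to ℝP¹ and maps the negative-real asymptotic marker at ∞ to the negative-real tangent half-line at 0. -/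
/-!
The reflection `conj ∘ f ∘ conj` has the same poles as `f`, with the same orders because the
poles are real, and it also has a zero of order `q` at `∞`. Hence `f / (conj ∘ f ∘ conj)` extends
to an entire function; it tends to `c / conj c` at `∞`, so by Liouville it is a constant `k`.
On the negative real axis this says `f / |f| = k · conj (f / |f|)`, and the marker `f / |f| → -1`
at `0⁻` forces `k = 1`. Finally `f` is real and nonvanishing on `(-∞, 0)`, so its sign is constant
there, equal to its value `-1` near `0`.
-/

open Complex ComplexConjugate Filter Topology

lemma AnalyticAt.conj_conj {f : ℂ → ℂ} {x : ℂ} (hf : AnalyticAt ℂ f x) :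
    AnalyticAt ℂ (conj ∘ f ∘ conj) (conj x) := by
  rw [Complex.analyticAt_iff_eventually_differentiableAt] at hf ⊢
  have hconj : Tendsto conj (𝓝 (conj x)) (𝓝 x) := by
    simpa using Complex.continuous_conj.tendsto (conj x)
  filter_upwards [hconj.eventually hf] with z hz
  exact differentiableAt_conj_conj_iff.2 hz

/-- At a real point, `F` and its reflection vanish to the same order, so their quotient has a
removable singularity there. -/
lemma AnalyticAt.exists_analyticAt_eventuallyEq_conj_conj_div {F : ℂ → ℂ} {A : ℂ}
    (hF : AnalyticAt ℂ F A) (hA : conj A = A) (hord : analyticOrderAt F A ≠ ⊤) :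
    ∃ φ : ℂ → ℂ, AnalyticAt ℂ φ A ∧ (conj ∘ F ∘ conj) / F =ᶠ[𝓝[≠] A] φ := by
  obtain ⟨u, hu, hu0, hFu⟩ := hF.analyticOrderAt_ne_top.1 hord
  have hconj : Tendsto conj (𝓝 A) (𝓝 A) := by
    simpa [hA] using Complex.continuous_conj.tendsto A
  refine ⟨(conj ∘ u ∘ conj) / u, (hA ▸ hu.conj_conj).div hu hu0, ?_⟩
  filter_upwards [hFu.filter_mono nhdsWithin_le_nhds,
    (hconj.eventually hFu).filter_mono nhdsWithin_le_nhds, self_mem_nhdsWithin] with z hz hcz hzA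
  simp only [Pi.div_apply, Function.comp_apply, hz, hcz, smul_eq_mul, map_mul, map_pow, map_sub,
    Complex.conj_conj, hA]
  exact mul_div_mul_left _ _ (pow_ne_zero _ (sub_ne_zero.2 hzA))

lemma limUnder_nhdsNE_eq {E : Type*} [NormedAddCommGroup E] {R φ : ℂ → E} {z : ℂ}
    (hφ : ContinuousAt φ z) (h : R =ᶠ[𝓝[≠] z] φ) : limUnder (𝓝[≠] z) R = φ z :=
  ((hφ.tendsto.mono_left nhdsWithin_le_nhds).congr' h.symm).limUnder_eq

lemma differentiable_limUnder_nhdsNE {E : Type*} [NormedAddCommGroup E] [NormedSpace ℂ E]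
    [CompleteSpace E] {R : ℂ → E}
    (h : ∀ z, ∃ φ : ℂ → E, AnalyticAt ℂ φ z ∧ R =ᶠ[𝓝[≠] z] φ) :
    Differentiable ℂ fun z => limUnder (𝓝[≠] z) R := by
  intro z
  obtain ⟨φ, hφ, hRφ⟩ := h z
  refine hφ.differentiableAt.congr_of_eventuallyEq ?_
  have hnear : ∀ᶠ w in 𝓝 z, ∀ᶠ v in 𝓝 w, v ≠ z → R v = φ v :=
    eventually_eventually_nhds.2 (eventually_nhdsWithin_iff.1 hRφ)
  filter_upwards [hnear, hφ.eventually_analyticAt] with w hw hφw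
  refine limUnder_nhdsNE_eq hφw.continuousAt ?_
  rcases eq_or_ne w z with rfl | hwz
  · exact hRφ
  · filter_upwards [hw.filter_mono nhdsWithin_le_nhds,
      (eventually_ne_nhds hwz).filter_mono nhdsWithin_le_nhds] with v hv hvz using hv hvz

lemma differentiable_indicator_inv {S : Set ℂ} {f : ℂ → ℂ} (hS : S.Finite)
    (hf : DifferentiableOn ℂ f Sᶜ) (hf0 : ∀ z ∈ Sᶜ, f z ≠ 0)
    (hpole : ∀ A ∈ S, Tendsto (fun z => ‖f z‖) (𝓝[Sᶜ] A) atTop) :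
    Differentiable ℂ (Sᶜ.indicator f⁻¹) := by
  have hopen : IsOpen Sᶜ := hS.isClosed.isOpen_compl
  have hdiff : ∀ z ∈ Sᶜ, DifferentiableAt ℂ (Sᶜ.indicator f⁻¹) z := fun z hz =>
    (((hf z hz).differentiableAt (hopen.mem_nhds hz)).inv (hf0 z hz)).congr_of_eventuallyEq
      (by filter_upwards [hopen.mem_nhds hz] with w hw using Set.indicator_of_mem hw _)
  intro A
  by_cases hA : A ∈ S
  · have hne : Sᶜ ∈ 𝓝[≠] A := by
      simpa [Set.compl_eq_univ_sdiff] using nhdsNE_of_nhdsNE_sdiff_finite univ_mem hS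
    have hlim : Tendsto (Sᶜ.indicator f⁻¹) (𝓝[≠] A) (𝓝 0) :=
      (tendsto_inv₀_cobounded.comp (tendsto_norm_atTop_iff_cobounded.1
        ((hpole A hA).mono_left (nhdsWithin_le_iff.2 hne)))).congr'
        (by filter_upwards [hne] with z hz using (Set.indicator_of_mem hz _).symm)
    refine (Complex.analyticAt_of_differentiable_on_punctured_nhds_of_continuousAt
      (eventually_of_mem hne hdiff) ?_).differentiableAt
    rw [← continuousWithinAt_compl_self, ContinuousWithinAt,
      Set.indicator_of_notMem (Set.notMem_compl_iff.2 hA)]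
    exact hlim
  · exact hdiff A hA

lemma conj_mem_compl {P : Set ℂ} (hP : ∀ z ∈ P, conj z = z) {z : ℂ} (hz : z ∈ Pᶜ) :
    conj z ∈ Pᶜ := fun h => hz (by rw [← Complex.conj_conj z, hP _ h]; exact h)

lemma exists_differentiable_eqOn_div_conj_conj {P : Set ℂ} {f : ℂ → ℂ} (hP : P.Finite)
    (hPreal : ∀ z ∈ P, conj z = z) (hf : DifferentiableOn ℂ f Pᶜ) (hf0 : ∀ z ∈ Pᶜ, f z ≠ 0)
    (hpole : ∀ A ∈ P, Tendsto (fun z => ‖f z‖) (𝓝[Pᶜ] A) atTop) :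
    ∃ H : ℂ → ℂ, Differentiable ℂ H ∧ ∀ z ∈ Pᶜ, H z = f z / conj (f (conj z)) := by
  set F := Pᶜ.indicator f⁻¹
  have hF : AnalyticOnNhd ℂ F Set.univ := fun z _ =>
    (differentiable_indicator_inv hP hf hf0 hpole).analyticAt z
  have hF0 : ∀ z ∈ Pᶜ, F z ≠ 0 := fun z hz => by
    simpa [F, Set.indicator_of_mem hz] using hf0 z hz
  have hRan : ∀ z ∈ Pᶜ, AnalyticAt ℂ ((conj ∘ F ∘ conj) / F) z := fun z hz => by
    have hFc : AnalyticAt ℂ (conj ∘ F ∘ conj) z := by simpa using (hF (conj z) trivial).conj_conj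
    exact hFc.div (hF z trivial) (hF0 z hz)
  have hR : ∀ z, ∃ φ : ℂ → ℂ, AnalyticAt ℂ φ z ∧ (conj ∘ F ∘ conj) / F =ᶠ[𝓝[≠] z] φ := by
    intro z
    by_cases hz : z ∈ P
    · obtain ⟨w, hw⟩ := hP.infinite_compl.nonempty
      have hord : analyticOrderAt F z ≠ ⊤ :=
        hF.analyticOrderAt_ne_top_of_isPreconnected (x := w) isPreconnected_univ trivial trivial
          (by rw [analyticOrderAt_eq_zero.2 (Or.inr (hF0 w hw))]; exact ENat.zero_ne_top)
      exact (hF z trivial).exists_analyticAt_eventuallyEq_conj_conj_div (hPreal z hz) hord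
    · exact ⟨_, hRan z hz, EventuallyEq.rfl⟩
  refine ⟨_, differentiable_limUnder_nhdsNE hR, fun z hz => ?_⟩
  rw [limUnder_nhdsNE_eq (hRan z hz).continuousAt EventuallyEq.rfl]
  simp only [Pi.div_apply, Function.comp_apply, F, Set.indicator_of_mem hz,
    Set.indicator_of_mem (conj_mem_compl hPreal hz), Pi.inv_apply, map_inv₀, inv_div_inv]

lemma tendsto_div_conj_conj_cocompact {f : ℂ → ℂ} {q : ℕ} {c : ℂ} (hc : c ≠ 0)
    (hf : Tendsto (fun z => z ^ q * f z) (cocompact ℂ) (𝓝 c)) :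
    Tendsto (fun z => f z / conj (f (conj z))) (cocompact ℂ) (𝓝 (c / conj c)) := by
  have hconj : Tendsto (fun z => z ^ q * conj (f (conj z))) (cocompact ℂ) (𝓝 (conj c)) :=
    ((Complex.continuous_conj.tendsto c).comp
      (hf.comp Complex.conjCLE.toHomeomorph.map_cocompact.le)).congr fun z => by simp
  refine (hf.div hconj ((map_ne_zero _).2 hc)).congr' ?_
  filter_upwards [isCompact_singleton.compl_mem_cocompact] with z hz
  exact mul_div_mul_left _ _ (pow_ne_zero _ hz)

/-- Liouville's theorem applied to the entire extension of `f / (conj ∘ f ∘ conj)`. -/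
theorem eq_div_conj_mul_conj_conj {P : Set ℂ} {f : ℂ → ℂ} {q : ℕ} {c : ℂ} (hP : P.Finite)
    (hPreal : ∀ z ∈ P, conj z = z) (hf : DifferentiableOn ℂ f Pᶜ) (hf0 : ∀ z ∈ Pᶜ, f z ≠ 0)
    (hpole : ∀ A ∈ P, Tendsto (fun z => ‖f z‖) (𝓝[Pᶜ] A) atTop) (hc : c ≠ 0)
    (hinf : Tendsto (fun z => z ^ q * f z) (cocompact ℂ) (𝓝 c)) :
    ∀ z ∈ Pᶜ, f z = c / conj c * conj (f (conj z)) := by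
  obtain ⟨H, hH, hHf⟩ := exists_differentiable_eqOn_div_conj_conj hP hPreal hf hf0 hpole
  have hlim : Tendsto H (cocompact ℂ) (𝓝 (c / conj c)) :=
    (tendsto_div_conj_conj_cocompact hc hinf).congr' (by
      filter_upwards [hP.isCompact.compl_mem_cocompact] with z hz using (hHf z hz).symm)
  intro z hz
  have hfz : conj (f (conj z)) ≠ 0 := (map_ne_zero _).2 (hf0 _ (conj_mem_compl hPreal hz))
  rw [← hH.apply_eq_of_tendsto_cocompact z hlim, hHf z hz, div_mul_cancel₀ _ hfz]

lemma eq_one_of_eventually_eq_mul_conj {α : Type*} {l : Filter α} [l.NeBot] {u : α → ℂ} {k : ℂ}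
    (hu : ∀ᶠ x in l, u x = k * conj (u x))
    (hlim : Tendsto (fun x => u x / ‖u x‖) l (𝓝 (-1))) : k = 1 := by
  have hconj : Tendsto (fun x => k * conj (u x / ‖u x‖)) l (𝓝 (k * conj (-1))) :=
    ((Complex.continuous_conj.tendsto _).comp hlim).const_mul k
  have heq : (fun x => u x / ‖u x‖) =ᶠ[l] fun x => k * conj (u x / ‖u x‖) := by
    filter_upwards [hu] with x hx
    rw [map_div₀, conj_ofReal, ← mul_div_assoc, ← hx]
  have := tendsto_nhds_unique (hlim.congr' heq) hconj
  rw [map_neg, map_one] at this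
  linear_combination this

lemma div_norm_mem_of_im_eq_zero {w : ℂ} (hw : w.im = 0) (hw0 : w ≠ 0) :
    w / ‖w‖ ∈ ({1, -1} : Set ℂ) := by
  obtain ⟨r, rfl⟩ : ∃ r : ℝ, (r : ℂ) = w := ⟨w.re, Complex.ext rfl hw.symm⟩
  have hr : r ≠ 0 := by exact_mod_cast hw0
  rcases hr.lt_or_gt with hr | hr
  · rw [norm_real, Real.norm_eq_abs, abs_of_neg hr, ofReal_neg, div_neg,
      div_self (by exact_mod_cast hr.ne)]
    exact Or.inr rfl
  · rw [norm_real, Real.norm_eq_abs, abs_of_pos hr, div_self (by exact_mod_cast hr.ne')]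
    exact Or.inl rfl

/-- A real, nonvanishing continuous function on `(-∞, a)` has constant sign. -/
lemma div_norm_eq_of_tendsto_nhdsLT {g : ℝ → ℂ} {a : ℝ} {b : ℂ}
    (hg : ContinuousOn g (Set.Iio a)) (hreal : ∀ x < a, (g x).im = 0) (hg0 : ∀ x < a, g x ≠ 0)
    (hlim : Tendsto (fun x => g x / ‖g x‖) (𝓝[<] a) (𝓝 b)) :
    ∀ x < a, g x / ‖g x‖ = b := by
  have hs : ContinuousOn (fun x => g x / ‖g x‖) (Set.Iio a) :=
    hg.div (continuous_ofReal.comp_continuousOn hg.norm) fun x hx => by simpa using hg0 x hx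
  intro x hx
  refine tendsto_nhds_unique (tendsto_const_nhds.congr' ?_) hlim
  filter_upwards [self_mem_nhdsWithin] with y hy
  exact isPreconnected_Iio.constant_of_mapsTo (Set.toFinite _).isDiscrete hs
    (fun x hx => div_norm_mem_of_im_eq_zero (hreal x hx) (hg0 x hx)) hx hy

theorem stmt11_general (p q : ℕ) (hp : 0 < p)
    (a : Fin p → ℝ) (hmono : StrictMono a) (ha0 : a ⟨0, hp⟩ = 0)
    (P : Set ℂ) (hP : P = Set.range (fun i : Fin p => ((a i : ℝ) : ℂ)))
    (f : ℂ → ℂ)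
    (hhol : DifferentiableOn ℂ f Pᶜ)
    (hnz : ∀ z ∈ Pᶜ, f z ≠ 0)
    (hpole : ∀ i : Fin p, Tendsto (fun z => ‖f z‖) (nhdsWithin ((a i : ℝ) : ℂ) Pᶜ) atTop)
    (hinf : ∃ c : ℂ, c ≠ 0 ∧ Tendsto (fun z : ℂ => z ^ q * f z) (cocompact ℂ) (nhds c))
    (hmarker : Tendsto (fun x : ℝ => ((‖f (x : ℂ)‖ : ℝ) : ℂ) / f (x : ℂ))
      (nhdsWithin 0 (Set.Iio 0)) (nhds (-1))) :
    (∀ z ∈ Pᶜ, f ((starRingEnd ℂ) z) = (starRingEnd ℂ) (f z)) ∧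
    (∀ x : ℝ, (x : ℂ) ∈ Pᶜ → (f (x : ℂ)).im = 0) ∧
    Tendsto (fun x : ℝ => f (x : ℂ) / ((‖f (x : ℂ)‖ : ℝ) : ℂ)) atBot (nhds (-1)) := by
  obtain ⟨c, hc, hct⟩ := hinf
  have hPreal : ∀ z ∈ P, conj z = z := by
    rw [hP]; rintro _ ⟨i, rfl⟩; exact conj_ofReal _
  have hneg : ∀ x : ℝ, x < 0 → (x : ℂ) ∈ Pᶜ := by
    rw [hP]; rintro x hx ⟨i, hi⟩
    have : a ⟨0, hp⟩ ≤ a i := hmono.monotone (Nat.zero_le _)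
    have : a i = x := ofReal_injective hi
    linarith
  have hk := eq_div_conj_mul_conj_conj (hP ▸ Set.finite_range _) hPreal hhol hnz
    (by rw [hP]; rintro _ ⟨i, rfl⟩; exact hP ▸ hpole i) hc hct
  have hsign : Tendsto (fun x : ℝ => f x / ‖f x‖) (𝓝[<] 0) (𝓝 (-1)) := by
    simpa using hmarker.inv₀ (by norm_num)
  have hk1 : c / conj c = 1 := eq_one_of_eventually_eq_mul_conj (by
    filter_upwards [self_mem_nhdsWithin] with x hx
    simpa using hk x (hneg x hx)) hsign
  have hconj : ∀ z ∈ Pᶜ, f (conj z) = conj (f z) := fun z hz => by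
    simpa [hk1] using hk _ (conj_mem_compl hPreal hz)
  have hreal : ∀ x : ℝ, (x : ℂ) ∈ Pᶜ → (f x).im = 0 :=
    fun x hx => conj_eq_iff_im.1 (by simpa using (hconj x hx).symm)
  refine ⟨hconj, hreal, tendsto_const_nhds.congr' ?_⟩
  have hneg1 := div_norm_eq_of_tendsto_nhdsLT
    (hhol.continuousOn.comp continuous_ofReal.continuousOn hneg)
    (fun x hx => hreal x (hneg x hx)) (fun x hx => hnz _ (hneg x hx)) hsign
  filter_upwards [eventually_lt_atBot 0] with x hx using (hneg1 x hx).symm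

theorem stmt11 (p q : ℕ) (hp : 0 < p) (hq : p ≤ q)
    (a : Fin p → ℝ) (hmono : StrictMono a) (ha0 : a ⟨0, hp⟩ = 0)
    (P : Set ℂ) (hP : P = Set.range (fun i : Fin p => ((a i : ℝ) : ℂ)))
    (f : ℂ → ℂ)
    (hhol : DifferentiableOn ℂ f Pᶜ)
    (hnz : ∀ z ∈ Pᶜ, f z ≠ 0)
    (hpole : ∀ i : Fin p, Tendsto (fun z => ‖f z‖) (nhdsWithin ((a i : ℝ) : ℂ) Pᶜ) atTop)
    (hinf : ∃ c : ℂ, c ≠ 0 ∧ Tendsto (fun z : ℂ => z ^ q * f z) (cocompact ℂ) (nhds c))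
    (hmarker : Tendsto (fun x : ℝ => ((‖f (x : ℂ)‖ : ℝ) : ℂ) / f (x : ℂ))
      (nhdsWithin 0 (Set.Iio 0)) (nhds (-1))) :
    (∀ z ∈ Pᶜ, f ((starRingEnd ℂ) z) = (starRingEnd ℂ) (f z)) ∧
    (∀ x : ℝ, (x : ℂ) ∈ Pᶜ → (f (x : ℂ)).im = 0) ∧
    Tendsto (fun x : ℝ => f (x : ℂ) / ((‖f (x : ℂ)‖ : ℝ) : ℂ)) atBot (nhds (-1)) :=
  stmt11_general p q hp a hmono ha0 P hP f hhol hnz hpole hinf hmarker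
end

section
/- Let u : 𝔻̄ → ℂP¹ be a nonconstant meromorphic function on the closed unit disk whose only pole is at −1 (of order one) and whose boundary values satisfy u(e^{iθ}) ∈ ℝ·e^{iη_ε(θ)} for θ ∈ (−π, π), and suppose the total weighted count of zeros (interior zeros with multiplicity, boundary zeros with half-multiplicity) equals 0, as dictated by the Maslov index of the boundary condition. Then u has no zeros at all; in particular u(e^{iθ}) ∈ ℝ⁺·e^{iη_ε(θ)} after possibly replacing u by −u, so the positive-boundary-value moduli space 𝒩 is nonempty. -/
open Complex Filter

/-- The strip-end coordinate `A(z) = i(z+1)/(1−z)` near the boundary puncture `−1`. -/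
noncomputable def Astrip (z : ℂ) : ℂ := Complex.I * (z + 1) / (1 - z)

/-- The disk model of `B₋`: closed unit disk minus `{0, −1}`. -/
def OmegaDom : Set ℂ := {z : ℂ | ‖z‖ ≤ 1 ∧ z ≠ 0 ∧ z ≠ -1}

/-- The moduli space `𝒩` of holomorphic maps with positive boundary values
`ℝ⁺·e^{iη_ε(θ)}`, a simple pole at `0` and leading coefficient `c₁ ∈ ℝ⁺` at `−1`. -/
def memN (ε : ℝ) (η : ℝ → ℝ) (w : ℂ → ℂ) : Prop :=
  ContinuousOn w OmegaDom ∧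
  DifferentiableOn ℂ w {z : ℂ | ‖z‖ < 1 ∧ z ≠ 0} ∧
  (∀ θ ∈ Set.Ioo (-Real.pi) Real.pi, ∃ r : ℝ, 0 < r ∧
    w (Complex.exp ((θ : ℂ) * Complex.I)) = (r : ℂ) * Complex.exp (((η θ : ℝ) : ℂ) * Complex.I)) ∧
  (∃ c₂ : ℂ, c₂ ≠ 0 ∧
    Tendsto (fun z : ℂ => z * w z) (nhdsWithin 0 {z : ℂ | ‖z‖ < 1 ∧ z ≠ 0}) (nhds c₂)) ∧
  (∃ c₁ : ℝ, 0 < c₁ ∧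
    Tendsto (fun z : ℂ => w z * (Astrip z) ^ (((ε / Real.pi : ℝ)) : ℂ))
      (nhdsWithin (-1) OmegaDom) (nhds ((c₁ : ℂ) * Complex.exp ((ε : ℂ) * Complex.I))))

lemma exp_ne_neg_one' {θ : ℝ} (hθ : θ ∈ Set.Ioo (-Real.pi) Real.pi) :
    Complex.exp ((θ : ℂ) * Complex.I) ≠ -1 := by
  intro h
  have h1 : (Complex.exp ((θ : ℂ) * Complex.I)).re = Real.cos θ := by
    simp [Complex.exp_ofReal_mul_I_re]
  rw [h] at h1
  have h2 : Real.cos θ = -1 := by simpa using h1.symm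
  have hc : 0 < Real.cos (θ/2) := by
    apply Real.cos_pos_of_mem_Ioo
    constructor <;> [linarith [hθ.1]; linarith [hθ.2]]
  have h3 := Real.cos_sq (θ/2)
  rw [show 2*(θ/2) = θ by ring] at h3
  nlinarith

lemma astrip_bdry {θ : ℝ} (hc : Real.cos θ ≠ 1) :
    Astrip (Complex.exp ((θ : ℂ) * Complex.I)) = ((Real.sin θ / (Real.cos θ - 1) : ℝ) : ℂ) := by
  have hid : (Real.sin θ : ℂ)^2 + (Real.cos θ : ℂ)^2 = 1 := by
    exact_mod_cast Real.sin_sq_add_cos_sq θ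
  have hexp : Complex.exp ((θ : ℂ) * Complex.I) = (Real.cos θ : ℂ) + (Real.sin θ : ℂ) * Complex.I := by
    rw [Complex.exp_mul_I, ← Complex.ofReal_cos, ← Complex.ofReal_sin]
  have hden2 : ((Real.cos θ : ℂ) - 1 : ℂ) ≠ 0 := by
    intro h
    exact hc (by exact_mod_cast sub_eq_zero.mp h)
  have hden : (1 : ℂ) - Complex.exp ((θ : ℂ) * Complex.I) ≠ 0 := by
    rw [hexp]
    intro h
    have : (1 : ℝ) - Real.cos θ = 0 := by
      have := congrArg Complex.re h
      simpa [Complex.cos_ofReal_re] using this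
    exact hc (by linarith)
  rw [Astrip, div_eq_iff hden, hexp, Complex.ofReal_div, Complex.ofReal_sub, Complex.ofReal_one,
    div_mul_eq_mul_div, eq_div_iff hden2]
  linear_combination Complex.I * hid + ((Real.cos θ:ℂ)*(Real.sin θ:ℂ) - (Real.sin θ:ℂ)) * Complex.I_sq

lemma bdry_g (θ : ℝ) :
    Complex.exp ((θ : ℂ) * Complex.I) + 3 + (Complex.exp ((θ : ℂ) * Complex.I))⁻¹
      = ((3 + 2 * Real.cos θ : ℝ) : ℂ) := by
  rw [← Complex.exp_neg]
  have h1 : Complex.exp ((θ : ℂ) * Complex.I) = (Real.cos θ : ℂ) + (Real.sin θ : ℂ) * Complex.I := by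
    rw [Complex.exp_mul_I, ← Complex.ofReal_cos, ← Complex.ofReal_sin]
  have h2 : Complex.exp (-((θ : ℂ) * Complex.I)) = (Real.cos θ : ℂ) - (Real.sin θ : ℂ) * Complex.I := by
    rw [show -((θ : ℂ) * Complex.I) = ((-θ : ℝ) : ℂ) * Complex.I by push_cast; ring,
      Complex.exp_mul_I, Complex.ofReal_neg, Complex.cos_neg, Complex.sin_neg,
      ← Complex.ofReal_cos, ← Complex.ofReal_sin]
    ring
  rw [h1, h2]; push_cast; ring

/- A nonconstant meromorphic `u` on the closed disk whose only pole is at `−1` (of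
   order one in the strip-like-end sense: `u·A^{ε/π} → c₁e^{iε}` with `c₁ ≠ 0` real),
   with boundary values in `ℝ·e^{iη_ε(θ)}`, and whose total weighted zero count
   (interior zeros with multiplicity `ord`, boundary zeros with half-multiplicity)
   equals 0, has no zeros at all; in particular the boundary values lie in
   `ℝ⁺·e^{iη_ε(θ)}` after possibly replacing `u` by `−u`, and the moduli space `𝒩`
   is nonempty. -/
theorem stmt19 (ε θ₁ θ₂ : ℝ) (hε : 0 < ε)
    (hθ₁ : -Real.pi < θ₁) (hθ₁₂ : θ₁ < θ₂) (hθ₂ : θ₂ < Real.pi)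
    (η : ℝ → ℝ) (hηsm : ContDiff ℝ (⊤ : ℕ∞) η)
    (hη₁ : ∀ θ ∈ Set.Icc (-Real.pi) θ₁, η θ = ε)
    (hη₂ : ∀ θ ∈ Set.Icc θ₂ Real.pi, η θ = 0)
    (hηmono : AntitoneOn η (Set.Icc (-Real.pi) Real.pi))
    (u : ℂ → ℂ)
    (hcont : ContinuousOn u {z : ℂ | ‖z‖ ≤ 1 ∧ z ≠ -1})
    (hhol : DifferentiableOn ℂ u (Metric.ball (0:ℂ) 1))
    (hnonconst : ¬ ∀ z ∈ Metric.ball (0:ℂ) 1, u z = u 0)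
    (hbdry : ∀ θ ∈ Set.Ioo (-Real.pi) Real.pi, ∃ r : ℝ,
      u (Complex.exp ((θ : ℂ) * Complex.I)) = (r : ℂ) * Complex.exp (((η θ : ℝ) : ℂ) * Complex.I))
    (hpole : ∃ c₁ : ℝ, c₁ ≠ 0 ∧
      Tendsto (fun z : ℂ => u z * (Astrip z) ^ (((ε / Real.pi : ℝ)) : ℂ))
        (nhdsWithin (-1) {z : ℂ | ‖z‖ ≤ 1 ∧ z ≠ -1}) (nhds ((c₁ : ℂ) * Complex.exp ((ε : ℂ) * Complex.I))))
    (ord : ℂ → ℕ)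
    (hord : ∀ z : ℂ, ‖z‖ ≤ 1 → z ≠ -1 → u z = 0 → 1 ≤ ord z)
    (hfin : {z : ℂ | ‖z‖ ≤ 1 ∧ z ≠ -1 ∧ u z = 0}.Finite)
    (hcount : ∑ z ∈ hfin.toFinset,
      (if ‖z‖ < 1 then (ord z : ℚ) else (ord z : ℚ) / 2) = 0) :
    (∀ z : ℂ, ‖z‖ ≤ 1 → z ≠ -1 → u z ≠ 0) ∧
    (∃ σ : ℝ, (σ = 1 ∨ σ = -1) ∧ ∀ θ ∈ Set.Ioo (-Real.pi) Real.pi, ∃ r : ℝ, 0 < r ∧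
      (σ : ℂ) * u (Complex.exp ((θ : ℂ) * Complex.I))
        = (r : ℂ) * Complex.exp (((η θ : ℝ) : ℂ) * Complex.I)) ∧
    (∃ w : ℂ → ℂ, memN ε η w) := by
  have hpi := Real.pi_pos
  -- Step 1: no zeros
  have hnozero : ∀ z : ℂ, ‖z‖ ≤ 1 → z ≠ -1 → u z ≠ 0 := by
    intro z hz1 hz2 hz0
    have hzmem : z ∈ hfin.toFinset := by
      rw [Set.Finite.mem_toFinset]; exact ⟨hz1, hz2, hz0⟩
    have hnn : ∀ x ∈ hfin.toFinset, (0:ℚ) ≤ (if ‖x‖ < 1 then (ord x : ℚ) else (ord x : ℚ) / 2) := by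
      intro x _; split <;> positivity
    have h0 := (Finset.sum_eq_zero_iff_of_nonneg hnn).mp hcount z hzmem
    have h1 : (1:ℚ) ≤ (ord z : ℚ) := by exact_mod_cast hord z hz1 hz2 hz0
    split at h0 <;> linarith
  -- boundary points are in the domain
  have hmemS : ∀ θ ∈ Set.Ioo (-Real.pi) Real.pi,
      Complex.exp ((θ:ℂ)*Complex.I) ∈ {z : ℂ | ‖z‖ ≤ 1 ∧ z ≠ -1} := by
    intro θ hθ
    refine ⟨?_, exp_ne_neg_one' hθ⟩
    rw [Complex.norm_exp_ofReal_mul_I]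
  -- the real boundary coefficient
  set F : ℝ → ℝ := fun θ =>
    (u (Complex.exp ((θ:ℂ)*Complex.I)) * Complex.exp (-(η θ : ℂ) * Complex.I)).re with hFdef
  have hFval : ∀ (θ : ℝ) (r : ℝ),
      u (Complex.exp ((θ:ℂ)*Complex.I)) = (r:ℂ) * Complex.exp ((η θ : ℂ) * Complex.I) →
      F θ = r := by
    intro θ r hr
    rw [hFdef]
    simp only
    rw [hr, show -(η θ : ℂ)*Complex.I = -((η θ : ℂ)*Complex.I) by ring, Complex.exp_neg,
      mul_assoc, mul_inv_cancel₀ (Complex.exp_ne_zero _), mul_one, Complex.ofReal_re]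
  have hFne : ∀ θ ∈ Set.Ioo (-Real.pi) Real.pi, F θ ≠ 0 := by
    intro θ hθ h0
    obtain ⟨r, hr⟩ := hbdry θ hθ
    have := hFval θ r hr
    rw [h0] at this
    rw [← this] at hr
    simp only [Complex.ofReal_zero, zero_mul] at hr
    exact hnozero _ (hmemS θ hθ).1 (hmemS θ hθ).2 hr
  have hηc : Continuous η := hηsm.continuous
  have hecont : Continuous (fun θ : ℝ => Complex.exp ((θ:ℂ)*Complex.I)) :=
    Complex.continuous_exp.comp (Complex.continuous_ofReal.mul continuous_const)
  have hFcont : ContinuousOn F (Set.Ioo (-Real.pi) Real.pi) := by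
    apply Complex.continuous_re.comp_continuousOn
    apply ContinuousOn.mul
    · exact hcont.comp hecont.continuousOn (fun θ hθ => hmemS θ hθ)
    · exact (Complex.continuous_exp.comp
        (((Complex.continuous_ofReal.comp hηc).neg).mul continuous_const)).continuousOn
  -- the sign
  have h0mem : (0:ℝ) ∈ Set.Ioo (-Real.pi) Real.pi := ⟨by linarith, hpi⟩
  have key : ∀ θ ∈ Set.Ioo (-Real.pi) Real.pi, ∀ θ' ∈ Set.Ioo (-Real.pi) Real.pi,
      F θ < 0 → 0 < F θ' → False := by
    intro θ hθ θ' hθ' h1 h2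
    have hIcc := (isPreconnected_Ioo (a := -Real.pi) (b := Real.pi)).intermediate_value
      hθ hθ' hFcont
    obtain ⟨x, hx, hx0⟩ := hIcc ⟨le_of_lt h1, le_of_lt h2⟩
    exact hFne x hx hx0
  obtain ⟨σ, hσ1, hσF⟩ : ∃ σ : ℝ, (σ = 1 ∨ σ = -1) ∧
      ∀ θ ∈ Set.Ioo (-Real.pi) Real.pi, 0 < σ * F θ := by
    rcases lt_or_gt_of_ne (hFne 0 h0mem) with h | h
    · refine ⟨-1, Or.inr rfl, fun θ hθ => ?_⟩
      rcases lt_or_gt_of_ne (hFne θ hθ) with h' | h'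
      · nlinarith
      · exact (key 0 h0mem θ hθ h h').elim
    · refine ⟨1, Or.inl rfl, fun θ hθ => ?_⟩
      rcases lt_or_gt_of_ne (hFne θ hθ) with h' | h'
      · exact (key θ hθ 0 h0mem h' h).elim
      · nlinarith
  have hσne : σ ≠ 0 := by rcases hσ1 with h | h <;> rw [h] <;> norm_num
  -- conjunct 2
  have conj2 : ∀ θ ∈ Set.Ioo (-Real.pi) Real.pi, ∃ r : ℝ, 0 < r ∧
      (σ : ℂ) * u (Complex.exp ((θ : ℂ) * Complex.I))
        = (r : ℂ) * Complex.exp (((η θ : ℝ) : ℂ) * Complex.I) := by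
    intro θ hθ
    obtain ⟨r, hr⟩ := hbdry θ hθ
    have hFr : F θ = r := hFval θ r hr
    refine ⟨σ * F θ, hσF θ hθ, ?_⟩
    rw [hr, hFr]; push_cast; ring
  -- the sign of the pole coefficient
  obtain ⟨c₁', hc₁ne, hc₁t⟩ := hpole
  set b := min θ₁ 0 with hbdef
  have hb : -Real.pi < b := lt_min hθ₁ (by linarith)
  set J := Set.Ioo (-Real.pi) b with hJdef
  have hJsub : J ⊆ Set.Ioo (-Real.pi) Real.pi := fun θ hθ =>
    ⟨hθ.1, lt_of_lt_of_le hθ.2 (le_trans (min_le_right _ _) (by linarith))⟩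
  have hJfacts : ∀ θ ∈ J, η θ = ε ∧ Real.sin θ < 0 ∧ Real.cos θ < 1 := by
    intro θ hθ
    have hθ0 : θ < 0 := lt_of_lt_of_le hθ.2 (min_le_right _ _)
    have hθπ : -Real.pi < θ := hθ.1
    have hsin : Real.sin θ < 0 := Real.sin_neg_of_neg_of_neg_pi_lt hθ0 hθπ
    have hcos : Real.cos θ < 1 := by
      nlinarith [Real.sin_sq_add_cos_sq θ, Real.neg_one_le_cos θ]
    exact ⟨hη₁ θ ⟨le_of_lt hθπ, le_trans (le_of_lt hθ.2) (min_le_left _ _)⟩, hsin, hcos⟩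
  have hval : ∀ θ ∈ J,
      σ * ((u (Complex.exp ((θ:ℂ)*Complex.I)) *
        (Astrip (Complex.exp ((θ:ℂ)*Complex.I))) ^ (((ε / Real.pi : ℝ)) : ℂ)) *
        Complex.exp (-(ε:ℂ)*Complex.I)).re
      = (σ * F θ) * (Real.sin θ / (Real.cos θ - 1)) ^ (ε / Real.pi) := by
    intro θ hθ
    obtain ⟨hη, hsin, hcos⟩ := hJfacts θ hθ
    have ht : 0 < Real.sin θ / (Real.cos θ - 1) :=
      div_pos_of_neg_of_neg hsin (by linarith)
    obtain ⟨r, hr⟩ := hbdry θ (hJsub hθ)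
    have hFr : F θ = r := hFval θ r hr
    rw [astrip_bdry (ne_of_lt hcos), ← Complex.ofReal_cpow (le_of_lt ht)]
    rw [hr, hη]
    rw [show -(ε:ℂ)*Complex.I = -((ε:ℂ)*Complex.I) by ring, Complex.exp_neg]
    rw [show (r:ℂ) * Complex.exp ((ε:ℂ)*Complex.I) *
        ((((Real.sin θ / (Real.cos θ - 1)) ^ (ε / Real.pi) : ℝ)):ℂ) *
        (Complex.exp ((ε:ℂ)*Complex.I))⁻¹
      = (r:ℂ) * ((((Real.sin θ / (Real.cos θ - 1)) ^ (ε / Real.pi) : ℝ)):ℂ) *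
        (Complex.exp ((ε:ℂ)*Complex.I) * (Complex.exp ((ε:ℂ)*Complex.I))⁻¹) by ring,
      mul_inv_cancel₀ (Complex.exp_ne_zero _), mul_one]
    rw [← Complex.ofReal_mul, Complex.ofReal_re, hFr]
    ring
  have hJne : (nhdsWithin (-Real.pi) J).NeBot := by
    apply mem_closure_iff_nhdsWithin_neBot.mp
    rw [hJdef, closure_Ioo (ne_of_lt hb)]
    exact ⟨le_refl _, le_of_lt hb⟩
  have hetend : Tendsto (fun θ : ℝ => Complex.exp ((θ:ℂ)*Complex.I))
      (nhdsWithin (-Real.pi) J) (nhdsWithin (-1) {z : ℂ | ‖z‖ ≤ 1 ∧ z ≠ -1}) := by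
    rw [tendsto_nhdsWithin_iff]
    constructor
    · have h1 : Tendsto (fun θ : ℝ => Complex.exp ((θ:ℂ)*Complex.I)) (nhds (-Real.pi))
          (nhds (Complex.exp (((-Real.pi : ℝ):ℂ)*Complex.I))) := hecont.continuousAt
      have h2 : Complex.exp (((-Real.pi : ℝ):ℂ)*Complex.I) = -1 := by
        rw [show ((-Real.pi : ℝ):ℂ)*Complex.I = -((Real.pi:ℂ)*Complex.I) by push_cast; ring,
          Complex.exp_neg, Complex.exp_pi_mul_I]
        norm_num
      rw [h2] at h1
      exact h1.mono_left nhdsWithin_le_nhds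
    · exact eventually_nhdsWithin_of_forall (fun θ hθ => hmemS θ (hJsub hθ))
  have hbig := hc₁t.comp hetend
  have htend : Tendsto (fun θ : ℝ =>
      σ * ((u (Complex.exp ((θ:ℂ)*Complex.I)) *
        (Astrip (Complex.exp ((θ:ℂ)*Complex.I))) ^ (((ε / Real.pi : ℝ)) : ℂ)) *
        Complex.exp (-(ε:ℂ)*Complex.I)).re)
      (nhdsWithin (-Real.pi) J) (nhds (σ * c₁')) := by
    have h1 := hbig.mul_const (Complex.exp (-(ε:ℂ)*Complex.I))
    have h2 : (c₁':ℂ) * Complex.exp ((ε:ℂ)*Complex.I) * Complex.exp (-(ε:ℂ)*Complex.I)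
        = (c₁':ℂ) := by
      rw [mul_assoc, ← Complex.exp_add, show (ε:ℂ)*Complex.I + -(ε:ℂ)*Complex.I = 0 by ring,
        Complex.exp_zero, mul_one]
    rw [h2] at h1
    have h3 := (Complex.continuous_re.tendsto (c₁':ℂ)).comp h1
    rw [show ((c₁':ℂ)).re = c₁' from Complex.ofReal_re c₁'] at h3
    exact h3.const_mul σ
  have hge : 0 ≤ σ * c₁' := by
    apply ge_of_tendsto htend
    apply eventually_nhdsWithin_of_forall
    intro θ hθ
    rw [hval θ hθ]
    have h1 := hσF θ (hJsub hθ)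
    obtain ⟨-, hsin, hcos⟩ := hJfacts θ hθ
    have ht : 0 < Real.sin θ / (Real.cos θ - 1) := div_pos_of_neg_of_neg hsin (by linarith)
    positivity
  have hσc : 0 < σ * c₁' := lt_of_le_of_ne hge (Ne.symm (mul_ne_zero hσne hc₁ne))
  -- the element of 𝒩
  have hsubS : OmegaDom ⊆ {z : ℂ | ‖z‖ ≤ 1 ∧ z ≠ -1} := fun z hz => ⟨hz.1, hz.2.2⟩
  have hsubS' : {z : ℂ | ‖z‖ < 1 ∧ z ≠ 0} ⊆ {z : ℂ | ‖z‖ ≤ 1 ∧ z ≠ -1} := by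
    intro z hz
    refine ⟨le_of_lt hz.1, fun h => ?_⟩
    rw [h] at hz
    simp at hz
  refine ⟨hnozero, ⟨σ, hσ1, conj2⟩, ⟨fun z => (σ:ℂ) * u z * (z + 3 + z⁻¹), ?_, ?_, ?_, ?_, ?_⟩⟩
  · -- ContinuousOn
    exact (continuousOn_const.mul (hcont.mono hsubS)).mul
      ((continuousOn_id.add continuousOn_const).add
        (continuousOn_id.inv₀ (fun z hz => hz.2.1)))
  · -- DifferentiableOn
    have hu : DifferentiableOn ℂ u {z : ℂ | ‖z‖ < 1 ∧ z ≠ 0} := by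
      apply hhol.mono
      intro z hz
      rw [Metric.mem_ball, dist_zero_right]
      exact hz.1
    exact ((differentiableOn_const _).mul hu).mul
      ((differentiableOn_id.add (differentiableOn_const _)).add
        (differentiableOn_id.inv (fun z hz => hz.2)))
  · -- boundary values
    intro θ hθ
    obtain ⟨r, hr⟩ := hbdry θ hθ
    have hFr : F θ = r := hFval θ r hr
    have hrpos : 0 < σ * r := hFr ▸ hσF θ hθ
    have hcos : (0:ℝ) < 3 + 2 * Real.cos θ := by nlinarith [Real.neg_one_le_cos θ]
    refine ⟨σ * r * (3 + 2 * Real.cos θ), mul_pos hrpos hcos, ?_⟩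
    show (σ:ℂ) * u (Complex.exp ((θ:ℂ)*Complex.I)) *
      (Complex.exp ((θ:ℂ)*Complex.I) + 3 + (Complex.exp ((θ:ℂ)*Complex.I))⁻¹) = _
    rw [bdry_g θ, hr]
    push_cast
    ring
  · -- simple pole at 0
    have hune : u 0 ≠ 0 := hnozero 0 (by norm_num) (by norm_num)
    refine ⟨(σ:ℂ) * u 0, mul_ne_zero (by exact_mod_cast hσne) hune, ?_⟩
    have hu0 : ContinuousWithinAt u {z : ℂ | ‖z‖ < 1 ∧ z ≠ 0} 0 :=
      (hcont 0 ⟨by norm_num, by norm_num⟩).mono hsubS'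
    have hpoly : Tendsto (fun z : ℂ => (σ:ℂ) * u z * (z^2 + 3*z + 1))
        (nhdsWithin 0 {z : ℂ | ‖z‖ < 1 ∧ z ≠ 0}) (nhds ((σ:ℂ) * u 0 * (0^2 + 3*0 + 1))) := by
      apply Tendsto.mul
      · exact tendsto_const_nhds.mul hu0
      · have hc : Continuous (fun z : ℂ => z^2 + 3*z + 1) :=
          ((continuous_pow 2).add (continuous_const.mul continuous_id)).add continuous_const
        exact (hc.continuousAt).continuousWithinAt
    rw [show ((0:ℂ)^2 + 3*0 + 1) = 1 by norm_num, mul_one] at hpoly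
    apply hpoly.congr'
    apply eventually_nhdsWithin_of_forall
    intro z hz
    have hz0 : z ≠ 0 := hz.2
    show (σ:ℂ) * u z * (z^2+3*z+1) = z * ((σ:ℂ) * u z * (z + 3 + z⁻¹))
    rw [show z * ((σ:ℂ) * u z * (z + 3 + z⁻¹)) = (σ:ℂ) * u z * (z*(z + 3 + z⁻¹)) by ring]
    congr 1
    field_simp
  · -- pole at -1
    refine ⟨σ * c₁', hσc, ?_⟩
    have h1 : Tendsto (fun z : ℂ => u z * (Astrip z) ^ (((ε / Real.pi : ℝ)) : ℂ))
        (nhdsWithin (-1) OmegaDom) (nhds ((c₁':ℂ) * Complex.exp ((ε:ℂ)*Complex.I))) :=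
      hc₁t.mono_left (nhdsWithin_mono _ hsubS)
    have h2 : Tendsto (fun z : ℂ => (σ:ℂ) * (z + 3 + z⁻¹))
        (nhdsWithin (-1) OmegaDom) (nhds ((σ:ℂ) * ((-1) + 3 + (-1)⁻¹))) := by
      have hc : ContinuousAt (fun z : ℂ => (σ:ℂ) * (z + 3 + z⁻¹)) (-1) := by
        apply ContinuousAt.mul continuousAt_const
        apply ContinuousAt.add (ContinuousAt.add continuousAt_id continuousAt_const)
        exact continuousAt_id.inv₀ (by norm_num)
      exact hc.continuousWithinAt
    have h3 := h1.mul h2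
    have h4 : (c₁':ℂ) * Complex.exp ((ε:ℂ)*Complex.I) * ((σ:ℂ) * ((-1) + 3 + (-1)⁻¹))
        = ((σ * c₁' : ℝ):ℂ) * Complex.exp ((ε:ℂ)*Complex.I) := by
      push_cast
      norm_num
      ring
    rw [h4] at h3
    apply h3.congr
    intro z
    ring
end
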